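/- arXiv:2408.17272 — 6 statements merged into one kernel-verified Lean document; each statement's English description precedes it below -/
import Mathlib

section
/- Let q be an odd prime power with q ≡ 3 (mod 4). Then the number of u ∈ F_q with χ(u+1) = χ(u-1) ≠ 0 equals (q-3)/2, where χ is the quadratic character of F_q. -/
/-!
`χ(u + 1) = χ(u - 1) ≠ 0` says exactly that `u² - 1 = (u + 1)(u - 1)` is a nonzero square.
The Joukowski map `t ↦ (t + t⁻¹) / 2` sends `t ∉ {0, 1, -1}` to such a `u`, since then
`u² - 1 = ((t - t⁻¹) / 2)²`, and conversely if `u² - 1 = s²` with `s ≠ 0` its preimages are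
exactly `u + s` and `u - s = (u + s)⁻¹`. So the map is two-to-one onto the set counted, which
therefore has `(q - 3) / 2` elements.
-/

open Finset
open scoped Classical

/-- The quadratic character of a finite field, valued in ℤ. -/
noncomputable def qchar {F : Type*} [Field F] (x : F) : ℤ :=
  if x = 0 then 0 else if IsSquare x then 1 else -1

section QChar

variable {F : Type*} [Field F]

lemma qchar_eq_quadraticCharFun (x : F) : qchar x = quadraticCharFun F x := by
  unfold qchar quadraticCharFun
  congr

lemma qchar_mul [Fintype F] (a b : F) : qchar (a * b) = qchar a * qchar b := by
  simp only [qchar_eq_quadraticCharFun]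
  convert quadraticCharFun_mul a b

lemma qchar_eq_and_ne_zero_iff [Fintype F] (a b : F) :
    qchar a = qchar b ∧ qchar a ≠ 0 ↔ a * b ≠ 0 ∧ IsSquare (a * b) := by
  have key : qchar a = qchar b ∧ qchar a ≠ 0 ↔ qchar (a * b) = 1 := by
    rw [qchar_mul]; unfold qchar; split_ifs <;> simp
  rw [key]; unfold qchar; split_ifs <;> simp_all

end QChar

section Joukowski

variable {F : Type*} [Field F]

def joukowski (t : F) : F := (t + t⁻¹) / 2

lemma card_filter_ne_zero_sq_ne_one [Fintype F] (hF : ringChar F ≠ 2) :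
    #{t : F | t ≠ 0 ∧ t ^ 2 ≠ 1} = Fintype.card F - 3 := by
  have h : ({t : F | t ≠ 0 ∧ t ^ 2 ≠ 1} : Finset F) = univ \ {0, 1, -1} := by
    ext t; simp [sq_eq_one_iff]
  have hm1 : (-1 : F) ≠ 1 := Ring.neg_one_ne_one_of_char_ne_two hF
  rw [h, card_sdiff_of_subset (subset_univ _), card_univ, card_insert_of_notMem (by simp),
    card_pair hm1.symm]

lemma add_ne_sub_of_char_ne_two (hF : ringChar F ≠ 2) (u : F) {s : F} (hs : s ≠ 0) :
    u + s ≠ u - s := fun h =>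
  hs <| (Ring.eq_self_iff_eq_zero_of_char_ne_two hF).mp (by linear_combination -h)

lemma isSquare_joukowski_sq_sub_one (hF : ringChar F ≠ 2) {t : F} (ht : t ≠ 0 ∧ t ^ 2 ≠ 1) :
    joukowski t ^ 2 - 1 ≠ 0 ∧ IsSquare (joukowski t ^ 2 - 1) := by
  obtain ⟨ht0, ht1⟩ := ht
  have h2 : (2 : F) ≠ 0 := Ring.two_ne_zero hF
  have hsq : joukowski t ^ 2 - 1 = ((t - t⁻¹) / 2) * ((t - t⁻¹) / 2) := by
    unfold joukowski; field_simp; ring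
  have hinv : t - t⁻¹ ≠ 0 := fun h => ht1 (by
    rw [sq]; nth_rewrite 2 [sub_eq_zero.mp h]; exact mul_inv_cancel₀ ht0)
  exact ⟨hsq ▸ mul_self_ne_zero.mpr (div_ne_zero hinv h2), hsq ▸ ⟨_, rfl⟩⟩

lemma joukowski_add_of_sq_sub_one_eq (hF : ringChar F ≠ 2) {u s : F} (hs : s ≠ 0)
    (hu : u ^ 2 - 1 = s * s) :
    (u + s ≠ 0 ∧ (u + s) ^ 2 ≠ 1) ∧ joukowski (u + s) = u := by
  have hprod : (u + s) * (u - s) = 1 := by linear_combination hu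
  have hne : u + s ≠ 0 := left_ne_zero_of_mul_eq_one hprod
  have hinv : (u + s)⁻¹ = u - s := inv_eq_of_mul_eq_one_right hprod
  refine ⟨⟨hne, fun h1 => add_ne_sub_of_char_ne_two hF u hs ?_⟩, ?_⟩
  · exact mul_left_cancel₀ hne (by linear_combination h1 - hprod)
  · rw [joukowski, hinv]; field_simp [Ring.two_ne_zero hF]; ring

lemma filter_joukowski_eq_pair [Fintype F] (hF : ringChar F ≠ 2) {u s : F} (hs : s ≠ 0)
    (hu : u ^ 2 - 1 = s * s) :
    ({t : F | (t ≠ 0 ∧ t ^ 2 ≠ 1) ∧ joukowski t = u} : Finset F) = {u + s, u - s} := by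
  ext t
  simp only [mem_filter, mem_univ, true_and, mem_insert, mem_singleton]
  constructor
  · rintro ⟨⟨ht0, -⟩, ht⟩
    have hsum : t + t⁻¹ = 2 * u := by rw [← ht, joukowski]; field_simp [Ring.two_ne_zero hF]
    have hroot : (t - u - s) * (t - u + s) = 0 := by
      linear_combination hu + t * hsum - mul_inv_cancel₀ ht0
    rcases mul_eq_zero.mp hroot with h | h
    · left; linear_combination h
    · right; linear_combination h
  · rintro (rfl | rfl)
    · exact joukowski_add_of_sq_sub_one_eq hF hs hu
    · simpa [sub_eq_add_neg] using
        joukowski_add_of_sq_sub_one_eq hF (neg_ne_zero.mpr hs) (by rw [hu, neg_mul_neg])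

lemma two_mul_card_filter_isSquare_sq_sub_one [Fintype F] (hF : ringChar F ≠ 2) :
    2 * #{u : F | u ^ 2 - 1 ≠ 0 ∧ IsSquare (u ^ 2 - 1)} = Fintype.card F - 3 := by
  have hfiber : ∀ u ∈ ({u : F | u ^ 2 - 1 ≠ 0 ∧ IsSquare (u ^ 2 - 1)} : Finset F),
      #{t : F | (t ≠ 0 ∧ t ^ 2 ≠ 1) ∧ joukowski t = u} = 2 := by
    intro u hu
    obtain ⟨hu0, s, hs⟩ := (mem_filter.mp hu).2
    have hs0 : s ≠ 0 := by rintro rfl; simp_all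
    rw [filter_joukowski_eq_pair hF hs0 hs, card_pair (add_ne_sub_of_char_ne_two hF u hs0)]
  rw [← card_filter_ne_zero_sq_ne_one hF,
    card_eq_sum_card_fiberwise (f := joukowski)
      (s := {t : F | t ≠ 0 ∧ t ^ 2 ≠ 1}) (t := {u : F | u ^ 2 - 1 ≠ 0 ∧ IsSquare (u ^ 2 - 1)})
      (fun t ht => by simpa using isSquare_joukowski_sq_sub_one hF (mem_filter.mp ht).2),
    sum_congr rfl fun u hu => by rw [filter_filter, hfiber u hu], sum_const, smul_eq_mul,
    mul_comm]

end Joukowski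

theorem stmt_3 {F : Type*} [Field F] [Fintype F]
    (hq : Fintype.card F % 4 = 3) :
    (Finset.univ.filter fun u : F =>
        qchar (u + 1) = qchar (u - 1) ∧ qchar (u + 1) ≠ 0).card
      = (Fintype.card F - 3) / 2 := by
  have hF : ringChar F ≠ 2 := fun h => by
    have := FiniteField.even_card_of_char_two h; omega
  have hcount := two_mul_card_filter_isSquare_sq_sub_one hF
  simp_rw [qchar_eq_and_ne_zero_iff, ← mul_self_sub_one, ← sq]
  omega
end

section
/- Let p be a prime with p^n ≡ 3 (mod 4), q = p^n ≥ 7, and f(x) = x^{q-2} over F_q. If q ≡ 2 (mod 3) and p ≠ 3, then f has differential uniformity 2; i.e., for every a ∈ F_q* and b ∈ F_q, the equation (x+a)^{q-2} - x^{q-2} = b has at most 2 solutions x ∈ F_q, and this bound 2 is attained for some (a,b). -/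
open Finset
open scoped Classical

/-!
On `𝔽_q` with `q ≥ 3` the power map `x ↦ x ^ (q - 2)` is inversion. For `x ∉ {0, -a}` the
equation `(x + a)⁻¹ - x⁻¹ = b` is the quadratic `b x² + a b x + a = 0`, and `0` or `-a` is a
solution only when `b = a⁻¹`. In that case the remaining solutions satisfy
`(x / a)² + x / a + 1 = 0`, i.e. `x / a` is a primitive cube root of unity, and there is none
in `𝔽_q` when `q ≡ 2 (mod 3)`; so the solutions are exactly `0` and `-a`.
-/

theorem Finset.card_le_two_of_forall_quadratic_eq_zero {R : Type*} [CommRing R] [IsDomain R]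
    {s : Finset R} {a b c : R} (habc : a ≠ 0 ∨ b ≠ 0 ∨ c ≠ 0)
    (h : ∀ x ∈ s, a * x ^ 2 + b * x + c = 0) : #s ≤ 2 := by
  open Polynomial in
  set P : R[X] := C a * X ^ 2 + C b * X + C c
  have hP : P ≠ 0 := by
    intro hP
    have h2 := congrArg (coeff · 2) hP
    have h1 := congrArg (coeff · 1) hP
    have h0 := congrArg (coeff · 0) hP
    simp [P] at h2 h1 h0
    tauto
  calc #s ≤ P.natDegree := card_le_degree_of_subset_roots fun x hx ↦ by
        simpa [mem_roots hP, P] using h x hx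
    _ ≤ 2 := natDegree_quadratic_le

theorem FiniteField.pow_card_sub_two_eq_inv {K : Type*} [Field K] [Fintype K]
    (hK : 2 < Fintype.card K) (x : K) : x ^ (Fintype.card K - 2) = x⁻¹ := by
  rcases eq_or_ne x 0 with rfl | hx
  · rw [inv_zero, zero_pow (by omega)]
  · refine eq_inv_of_mul_eq_one_left ?_
    rw [← pow_succ, show Fintype.card K - 2 + 1 = Fintype.card K - 1 by omega,
      pow_card_sub_one_eq_one x hx]

theorem FiniteField.sq_add_self_add_one_ne_zero {K : Type*} [Field K] [Fintype K]
    (hK : Fintype.card K % 3 = 2) (x : K) : x ^ 2 + x + 1 ≠ 0 := by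
  intro hx
  obtain ⟨k, hk⟩ : ∃ k, Fintype.card K = 3 * k + 2 := ⟨Fintype.card K / 3, by omega⟩
  have hx0 : x ≠ 0 := by rintro rfl; norm_num at hx
  have hcube : x ^ 3 = 1 := by linear_combination (x - 1) * hx
  have hx1 : x = 1 := by
    have := pow_card_sub_one_eq_one x hx0
    rwa [hk, show 3 * k + 2 - 1 = 3 * k + 1 by omega, pow_succ, pow_mul, hcube, one_pow,
      one_mul] at this
  have hq : ((3 * k + 2 : ℕ) : K) = 0 := hk ▸ cast_card_eq_zero K
  subst hx1
  push_cast at hq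
  exact one_ne_zero (α := K) (by linear_combination ((k : K) + 1) * hx - hq)

section InverseDifference

variable {K : Type*} [Field K]

theorem quadratic_of_inv_add_sub_inv_eq {a b x : K} (ha : a ≠ 0) (hab : a * b ≠ 1)
    (h : (x + a)⁻¹ - x⁻¹ = b) : b * x ^ 2 + a * b * x + a = 0 := by
  have hx : x ≠ 0 := by
    rintro rfl
    simp only [zero_add, inv_zero, sub_zero] at h
    exact hab (h ▸ mul_inv_cancel₀ ha)
  have hxa : x + a ≠ 0 := by
    intro hxa
    rw [hxa, eq_neg_of_add_eq_zero_left hxa] at h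
    simp only [inv_zero, inv_neg, zero_sub, neg_neg] at h
    exact hab (h ▸ mul_inv_cancel₀ ha)
  field_simp at h
  linear_combination -h

theorem inv_add_sub_inv_eq_inv_iff (hK : ∀ y : K, y ^ 2 + y + 1 ≠ 0) {a x : K} (ha : a ≠ 0) :
    (x + a)⁻¹ - x⁻¹ = a⁻¹ ↔ x = 0 ∨ x = -a := by
  refine ⟨fun h ↦ ?_, by rintro (rfl | rfl) <;> simp⟩
  by_contra! hx
  have hxa : x + a ≠ 0 := fun hxa ↦ hx.2 (eq_neg_of_add_eq_zero_left hxa)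
  apply hK (x / a)
  rw [inv_sub_inv hxa hx.1, div_eq_iff (mul_ne_zero hxa hx.1)] at h
  field_simp at h ⊢
  linear_combination -h

variable [Fintype K]

theorem filter_inv_add_sub_inv_eq_inv (hK : ∀ y : K, y ^ 2 + y + 1 ≠ 0) {a : K} (ha : a ≠ 0) :
    ({x | (x + a)⁻¹ - x⁻¹ = a⁻¹} : Finset K) = {0, -a} := by
  ext x
  simp [inv_add_sub_inv_eq_inv_iff hK ha]

theorem card_filter_inv_add_sub_inv_eq_le_two (hK : ∀ y : K, y ^ 2 + y + 1 ≠ 0) {a : K}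
    (ha : a ≠ 0) (b : K) : #{x | (x + a)⁻¹ - x⁻¹ = b} ≤ 2 := by
  by_cases hab : a * b = 1
  · rw [eq_inv_of_mul_eq_one_right hab, filter_inv_add_sub_inv_eq_inv hK ha]
    exact card_le_two
  · exact card_le_two_of_forall_quadratic_eq_zero (Or.inr (Or.inr ha)) fun x hx ↦
      quadratic_of_inv_add_sub_inv_eq ha hab (mem_filter.mp hx).2

end InverseDifference

theorem stmt_7_general {F : Type*} [Field F] [Fintype F] (p n : ℕ)
    (hcard : Fintype.card F = p ^ n)
    (hq7 : 7 ≤ p ^ n)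
    (hq3 : p ^ n % 3 = 2) :
    (∀ a b : F, a ≠ 0 →
      (Finset.univ.filter fun x : F =>
        (x + a) ^ (Fintype.card F - 2) - x ^ (Fintype.card F - 2) = b).card ≤ 2) ∧
    (∃ a b : F, a ≠ 0 ∧
      (Finset.univ.filter fun x : F =>
        (x + a) ^ (Fintype.card F - 2) - x ^ (Fintype.card F - 2) = b).card = 2) := by
  have hroot := FiniteField.sq_add_self_add_one_ne_zero (K := F) (by omega)
  simp only [FiniteField.pow_card_sub_two_eq_inv (K := F) (by omega)]
  refine ⟨fun a b ha ↦ card_filter_inv_add_sub_inv_eq_le_two hroot ha b,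
    1, 1, one_ne_zero, ?_⟩
  simpa using congrArg card (filter_inv_add_sub_inv_eq_inv hroot (one_ne_zero (α := F)))

theorem stmt_7 {F : Type*} [Field F] [Fintype F] (p n : ℕ)
    (hp : p.Prime) (hn : 0 < n) (hcard : Fintype.card F = p ^ n)
    (hq4 : p ^ n % 4 = 3) (hq7 : 7 ≤ p ^ n)
    (hq3 : p ^ n % 3 = 2) (hp3 : p ≠ 3) :
    (∀ a b : F, a ≠ 0 →
      (Finset.univ.filter fun x : F =>
        (x + a) ^ (Fintype.card F - 2) - x ^ (Fintype.card F - 2) = b).card ≤ 2) ∧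
    (∃ a b : F, a ≠ 0 ∧
      (Finset.univ.filter fun x : F =>
        (x + a) ^ (Fintype.card F - 2) - x ^ (Fintype.card F - 2) = b).card = 2) :=
  stmt_7_general p n hcard hq7 hq3
end

section
/- Let q = p^n ≡ 3 (mod 4), q ≥ 7, u ∈ {1, -1}, and f_u(x) = u·x^{(q-1)/2-1} + x^{q-2} over F_q. For every a ∈ F_q*, the number of x ∈ F_q \ {0, -a} satisfying f_u(x+a) - f_u(x) = 0 equals (q-3)/4. -/
/-!
For `y ≠ 0` Euler's criterion gives `f_u(y) = (u χ(y) + 1) / y`, where `χ` is the quadratic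
character, so `f_u(y)` is `0` when `χ(y) = -u` and `2 / y` otherwise. Hence for `x ∉ {0, -a}`,
`f_u(x + a) = f_u(x)` exactly when `χ(x) = χ(x + a) = -u`. Four times the number of such `x`
is `∑ (1 - u χ(x)) (1 - u χ(x + a))` over `x ∉ {0, -a}`, which the vanishing of `∑ χ`, the
Jacobi sum identity `∑ χ(x) χ(x + a) = -1` and `χ(-1) = -1` (as `q ≡ 3 mod 4`) evaluate to
`q - 3`.
-/

open Finset
open scoped Classical

theorem one_add_mul_mul_one_add_mul_eq_ite {s t ε : ℤ} (hs : s = 1 ∨ s = -1)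
    (ht : t = 1 ∨ t = -1) (hε : ε = 1 ∨ ε = -1) :
    (1 + ε * s) * (1 + ε * t) = if s = ε ∧ t = ε then 4 else 0 := by
  rcases hs with rfl | rfl <;> rcases ht with rfl | rfl <;> rcases hε with rfl | rfl <;> decide

theorem ite_div_eq_ite_div_iff {K : Type*} [Field K] (h2 : (2 : K) ≠ 0) {P Q : Prop}
    [Decidable P] [Decidable Q] {x y : K} (hx : x ≠ 0) (hy : y ≠ 0) (hxy : x ≠ y) :
    (if P then 0 else 2) / x = (if Q then 0 else 2) / y ↔ P ∧ Q := by
  split_ifs with hP hQ hQ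
  · simp [hP, hQ]
  · simpa [hP, hQ] using (div_ne_zero h2 hy).symm
  · simpa [hP, hQ] using div_ne_zero h2 hx
  · simp only [hP, hQ, and_false, iff_false]
    rw [div_eq_div_iff hx hy]
    exact fun h ↦ hxy (mul_left_cancel₀ h2 h).symm

theorem MulChar.IsQuadratic.sum_mul_apply_add_eq_neg_one {F R : Type*} [Field F] [Fintype F]
    [CommRing R] [IsDomain R] {χ : MulChar F R} (hχ : χ.IsQuadratic) (hχ1 : χ ≠ 1) {a : F}
    (ha : a ≠ 0) :
    ∑ x, χ x * χ (x + a) = -1 := by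
  have hJ : jacobiSum χ χ = -χ (-1) := by
    simpa only [hχ.inv] using jacobiSum_nontrivial_inv hχ1
  have hsq : χ a * χ a = 1 := by
    rw [← MulChar.mul_apply, ← sq, hχ.sq_eq_one, MulChar.one_apply ha.isUnit]
  calc ∑ x, χ x * χ (x + a) = ∑ t, χ (-a * t) * χ (-a * t + a) :=
        (Fintype.sum_equiv (Equiv.mulLeft₀ (-a) (neg_ne_zero.2 ha)) _ _ fun _ ↦ rfl).symm
    _ = ∑ t, χ (-1) * (χ t * χ (1 - t)) := by
        refine sum_congr rfl fun t _ ↦ ?_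
        rw [show -a * t + a = a * (1 - t) by ring, show -a = -1 * a by ring, map_mul, map_mul,
          map_mul]
        linear_combination (χ (-1) * χ t * χ (1 - t)) * hsq
    _ = -1 := by
        rw [← mul_sum, ← jacobiSum, hJ, mul_neg, ← map_mul, neg_one_mul, neg_neg, map_one]

section QuadraticChar

variable {F : Type*} [Field F] [Fintype F]

theorem quadraticChar_sum_mul_apply_add (hF : ringChar F ≠ 2) {a : F} (ha : a ≠ 0) :
    ∑ x, quadraticChar F x * quadraticChar F (x + a) = -1 :=
  (quadraticChar_isQuadratic F).sum_mul_apply_add_eq_neg_one (quadraticChar_ne_one hF) ha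

theorem quadraticChar_sum_apply_add (hF : ringChar F ≠ 2) (a : F) :
    ∑ x, quadraticChar F (x + a) = 0 :=
  (Equiv.sum_comp (Equiv.addRight a) _).trans (quadraticChar_sum_zero hF)

theorem quadraticChar_neg_of_card_mod_four (hq : Fintype.card F % 4 = 3) (a : F) :
    quadraticChar F (-a) = -quadraticChar F a := by
  have h : quadraticChar F (-1) = -1 :=
    quadraticChar_neg_one_iff_not_isSquare.2 (by rw [FiniteField.isSquare_neg_one_iff, not_not, hq])
  rw [neg_eq_neg_one_mul, map_mul, h, neg_one_mul]

theorem four_mul_card_filter_quadraticChar_eq (hF : ringChar F ≠ 2) {a : F} (ha : a ≠ 0)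
    {ε : ℤ} (hε : ε = 1 ∨ ε = -1) :
    4 * (#{x ∈ univ \ {0, -a} | quadraticChar F x = ε ∧ quadraticChar F (x + a) = ε} : ℤ)
      = Fintype.card F - 3 - ε * (quadraticChar F a + quadraticChar F (-a)) := by
  set χ := quadraticChar F
  set g : F → ℤ := fun x ↦ (1 + ε * χ x) * (1 + ε * χ (x + a))
  have hε2 : ε * ε = 1 := by rcases hε with rfl | rfl <;> rfl
  have h0a : (0 : F) ≠ -a := (neg_ne_zero.2 ha).symm
  have hg_univ : ∑ x, g x = Fintype.card F - 1 :=
    calc ∑ x, g x = ∑ x, (1 + ε * χ x + ε * χ (x + a) + ε * ε * (χ x * χ (x + a))) :=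
          sum_congr rfl fun x _ ↦ by ring
      _ = Fintype.card F + ε * ∑ x, χ x + ε * ∑ x, χ (x + a)
            + ε * ε * ∑ x, χ x * χ (x + a) := by
          simp only [sum_add_distrib, ← mul_sum, sum_const, card_univ, nsmul_one]
      _ = Fintype.card F - 1 := by
          rw [quadraticChar_sum_zero hF, quadraticChar_sum_apply_add hF,
            quadraticChar_sum_mul_apply_add hF ha, hε2]
          ring
  have hg_pair : ∑ x ∈ {0, -a}, g x = 2 + ε * (χ a + χ (-a)) := by
    simp only [g, sum_pair h0a, χ, quadraticChar_zero, zero_add, neg_add_cancel]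
    ring
  have hg_off : ∑ x ∈ univ \ {0, -a}, g x
      = 4 * #{x ∈ univ \ {0, -a} | χ x = ε ∧ χ (x + a) = ε} := by
    rw [natCast_card_filter, mul_sum]
    refine sum_congr rfl fun x hx ↦ ?_
    simp only [mem_sdiff, mem_univ, mem_insert, mem_singleton, true_and, not_or] at hx
    rw [show g x = _ from one_add_mul_mul_one_add_mul_eq_ite (quadraticChar_dichotomy hx.1)
      (quadraticChar_dichotomy fun h ↦ hx.2 (eq_neg_of_add_eq_zero_left h)) hε]
    split_ifs <;> norm_num
  rw [← hg_off, sum_sdiff_eq_sub (subset_univ _), hg_univ, hg_pair]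
  ring

theorem mul_pow_half_sub_one_add_pow_sub_two (hF : ringChar F ≠ 2) (u : F) {y : F}
    (hy : y ≠ 0) :
    u * y ^ ((Fintype.card F - 1) / 2 - 1) + y ^ (Fintype.card F - 2)
      = (u * quadraticChar F y + 1) / y := by
  have hodd := FiniteField.odd_card_of_char_ne_two hF
  have hq1 := Fintype.one_lt_card (α := F)
  have hχ : (quadraticChar F y : F) = y ^ ((Fintype.card F - 1) / 2) := by
    rw [quadraticChar_eq_pow_of_char_ne_two' hF]
    congr 1
    omega
  rw [pow_sub₀ _ hy (by omega), pow_sub₀ _ hy (by omega), ← hχ, FiniteField.pow_card]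
  field_simp

theorem neg_intCast_mul_quadraticChar_add_one {ε : ℤ} (hε : ε = 1 ∨ ε = -1) {y : F}
    (hy : y ≠ 0) :
    -(ε : F) * quadraticChar F y + 1 = if quadraticChar F y = ε then 0 else 2 := by
  rcases quadraticChar_dichotomy hy with h | h <;> rcases hε with rfl | rfl <;> norm_num [h]

end QuadraticChar

theorem stmt_10_general {F : Type*} [Field F] [Fintype F] (p n : ℕ)
    (hcard : Fintype.card F = p ^ n)
    (hq4 : p ^ n % 4 = 3) (u : F) (hu : u = 1 ∨ u = -1)
    (fu : F → F) (hfu : ∀ x, fu x = u * x ^ ((Fintype.card F - 1) / 2 - 1) + x ^ (Fintype.card F - 2))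
    (a : F) (ha : a ≠ 0) :
    ((Finset.univ \ {0, -a} : Finset F).filter fun x => fu (x + a) - fu x = 0).card
      = (Fintype.card F - 3) / 4 := by
  have hq : Fintype.card F % 4 = 3 := hcard ▸ hq4
  have hF : ringChar F ≠ 2 := fun h ↦ by
    have := FiniteField.even_card_of_char_two h
    omega
  obtain ⟨ε, hε, rfl⟩ : ∃ ε : ℤ, (ε = 1 ∨ ε = -1) ∧ u = -ε := by
    rcases hu with rfl | rfl
    exacts [⟨-1, by simp⟩, ⟨1, by simp⟩]
  have hfu' : ∀ y ≠ 0, fu y = (if quadraticChar F y = ε then 0 else 2) / y := fun y hy ↦ by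
    rw [hfu, mul_pow_half_sub_one_add_pow_sub_two hF _ hy,
      neg_intCast_mul_quadraticChar_add_one hε hy]
  have hsol : ∀ x ∈ univ \ {0, -a},
      fu (x + a) - fu x = 0 ↔ quadraticChar F x = ε ∧ quadraticChar F (x + a) = ε := by
    intro x hx
    simp only [mem_sdiff, mem_univ, mem_insert, mem_singleton, true_and, not_or] at hx
    have hxa : x + a ≠ 0 := fun h ↦ hx.2 (eq_neg_of_add_eq_zero_left h)
    rw [sub_eq_zero, hfu' _ hxa, hfu' _ hx.1,
      ite_div_eq_ite_div_iff (Ring.two_ne_zero hF) hxa hx.1 (by simpa using ha), and_comm]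
  have hcount := four_mul_card_filter_quadraticChar_eq hF ha hε
  rw [quadraticChar_neg_of_card_mod_four hq, add_neg_cancel, mul_zero, sub_zero] at hcount
  rw [filter_congr hsol]
  omega

theorem stmt_10 {F : Type*} [Field F] [Fintype F] (p n : ℕ)
    (hp : p.Prime) (hn : 0 < n) (hcard : Fintype.card F = p ^ n)
    (hq4 : p ^ n % 4 = 3) (hq7 : 7 ≤ p ^ n) (u : F) (hu : u = 1 ∨ u = -1)
    (fu : F → F) (hfu : ∀ x, fu x = u * x ^ ((Fintype.card F - 1) / 2 - 1) + x ^ (Fintype.card F - 2))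
    (a : F) (ha : a ≠ 0) :
    ((Finset.univ \ {0, -a} : Finset F).filter fun x => fu (x + a) - fu x = 0).card
      = (Fintype.card F - 3) / 4 :=
  stmt_10_general p n hcard hq4 u hu fu hfu a ha
end

section
/- Let q = p^n ≡ 3 (mod 4), q ≥ 7, and u ∈ F_q with χ(u+1) = χ(u-1) ≠ 0. Then for every a ∈ F_q*, there is exactly one x ∈ F_q \ {0, -a} satisfying f_u(x+a) - f_u(x) = 0, where f_u(x) = u·x^{(q-1)/2-1} + x^{q-2}. -/
open Finset
open scoped Classical

/-!
Write `χ` for the quadratic character and `k = (q - 1) / 2`. On `F*` we have `x ^ k = χ(x)` and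
`x ^ (q - 2) = x⁻¹`, so `f_u(x) = (u χ(x) + 1) / x`. Clearing denominators in
`f_u(x + a) = f_u(x)` and running through the four sign patterns `(χ(x), χ(x + a))`, equal signs
force `u = ±1`, while the two opposite patterns each pin down one candidate,
`v = a (1 - u) / (2u)` or `-w` with `w = a (u + 1) / (2u) = v + a`. Since `vw` is
`-(a / 2u)² (u + 1)(u - 1)` and `χ(-1) = -1 = -χ(u + 1) χ(u - 1)`, the values `χ(v)` and
`χ(w)` are opposite, so exactly one candidate has the sign pattern it needs.
-/

theorem div_eq_div_iff_of_sign {F : Type*} [Field F] {u a x : F} {s t : ℤ} (h2 : (2 : F) ≠ 0)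
    (hu₀ : u ≠ 0) (hu₁ : u + 1 ≠ 0) (hu₂ : u - 1 ≠ 0) (ha : a ≠ 0) (hx : x ≠ 0)
    (hxa : x + a ≠ 0) (hs : s = 1 ∨ s = -1) (ht : t = 1 ∨ t = -1) :
    (u * t + 1) / (x + a) = (u * s + 1) / x ↔
      s = -1 ∧ t = 1 ∧ x = a * (1 - u) / (2 * u) ∨
        s = 1 ∧ t = -1 ∧ x = -(a * (u + 1) / (2 * u)) := by
  rw [div_eq_div_iff hxa hx]
  constructor
  · intro h
    rcases hs with rfl | rfl <;> rcases ht with rfl | rfl <;> push_cast at h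
    · exact absurd (by linear_combination -h) (mul_ne_zero hu₁ ha)
    · refine .inr ⟨rfl, rfl, ?_⟩
      field_simp
      linear_combination -h
    · refine .inl ⟨rfl, rfl, ?_⟩
      field_simp
      linear_combination h
    · exact absurd (by linear_combination h) (mul_ne_zero hu₂ ha)
  · rintro (⟨rfl, rfl, rfl⟩ | ⟨rfl, rfl, rfl⟩) <;> field_simp <;> ring

section QuadraticChar

variable {F : Type*} [Field F] [Fintype F] [DecidableEq F]

theorem quadraticChar_neg_of_neg_one (hneg : quadraticChar F (-1) = -1) (y : F) :
    quadraticChar F (-y) = -quadraticChar F y := by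
  rw [neg_eq_neg_one_mul, map_mul, hneg, neg_one_mul]

theorem two_ne_zero_of_quadraticChar_neg_one (hneg : quadraticChar F (-1) = -1) :
    (2 : F) ≠ 0 := by
  intro h
  rw [show (-1 : F) = 1 by linear_combination -h, map_one] at hneg
  exact absurd hneg (by decide)

theorem quadraticChar_div_eq_neg (hneg : quadraticChar F (-1) = -1) {u a : F}
    (hu : quadraticChar F (u + 1) = quadraticChar F (u - 1)) (hu₀ : u ≠ 0) (hu₁ : u + 1 ≠ 0)
    (ha : a ≠ 0) :
    quadraticChar F (a * (1 - u) / (2 * u)) = -quadraticChar F (a * (u + 1) / (2 * u)) := by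
  have h2 := two_ne_zero_of_quadraticChar_neg_one hneg
  have hprod : a * (1 - u) / (2 * u) * (a * (u + 1) / (2 * u)) =
      -1 * (a / (2 * u)) ^ 2 * ((u + 1) * (u - 1)) := by
    field_simp
    ring
  have hmul := congrArg (quadraticChar F) hprod
  rw [map_mul, map_mul, map_mul, map_mul, hneg, ← hu, ← sq, quadraticChar_sq_one hu₁,
    quadraticChar_sq_one' (div_ne_zero ha (mul_ne_zero h2 hu₀))] at hmul
  have hw : a * (u + 1) / (2 * u) ≠ 0 := div_ne_zero (mul_ne_zero ha hu₁) (mul_ne_zero h2 hu₀)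
  rcases quadraticChar_dichotomy hw with h | h <;> rw [h] at hmul ⊢ <;> linarith

theorem div_eq_div_iff_of_quadraticChar (hneg : quadraticChar F (-1) = -1) {u a x : F}
    (hu : quadraticChar F (u + 1) = quadraticChar F (u - 1)) (hu₀ : u ≠ 0) (hu₁ : u + 1 ≠ 0)
    (hu₂ : u - 1 ≠ 0) (ha : a ≠ 0) :
    (x ≠ 0 ∧ x + a ≠ 0 ∧
        (u * quadraticChar F (x + a) + 1) / (x + a) = (u * quadraticChar F x + 1) / x) ↔
      x = a * (1 - u) / (2 * u) ∧ quadraticChar F (a * (1 - u) / (2 * u)) = -1 ∨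
        x = -(a * (u + 1) / (2 * u)) ∧ quadraticChar F (a * (1 - u) / (2 * u)) = 1 := by
  have h2 := two_ne_zero_of_quadraticChar_neg_one hneg
  have hχneg := quadraticChar_neg_of_neg_one hneg
  have hsol {y : F} (hy : y ≠ 0) (hya : y + a ≠ 0) :=
    div_eq_div_iff_of_sign h2 hu₀ hu₁ hu₂ ha hy hya (quadraticChar_dichotomy hy)
      (quadraticChar_dichotomy hya)
  have hvw := quadraticChar_div_eq_neg hneg hu hu₀ hu₁ ha
  set v := a * (1 - u) / (2 * u) with hv_def
  set w := a * (u + 1) / (2 * u) with hw_def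
  have hva : v + a = w := by rw [hv_def, hw_def]; field_simp; ring
  have hwa : -w + a = -v := by rw [← hva]; ring
  have hv : v ≠ 0 :=
    div_ne_zero (mul_ne_zero ha fun h => hu₂ (by linear_combination -h)) (mul_ne_zero h2 hu₀)
  have hw : w ≠ 0 := div_ne_zero (mul_ne_zero ha hu₁) (mul_ne_zero h2 hu₀)
  have hva' : v + a ≠ 0 := hva ▸ hw
  have hwa' : -w + a ≠ 0 := hwa ▸ neg_ne_zero.2 hv
  constructor
  · rintro ⟨hx, hxa, h⟩
    rcases (hsol hx hxa).1 h with ⟨hs, -, rfl⟩ | ⟨hs, -, rfl⟩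
    · exact .inl ⟨rfl, hs⟩
    · exact .inr ⟨rfl, by rw [hvw, ← hχneg, hs]⟩
  · rintro (⟨rfl, h⟩ | ⟨rfl, h⟩)
    · refine ⟨hv, hva', (hsol hv hva').2 (.inl ⟨h, ?_, rfl⟩)⟩
      rw [hva]
      linarith
    · have hw' : -w ≠ 0 := neg_ne_zero.2 hw
      refine ⟨hw', hwa', (hsol hw' hwa').2 (.inr ⟨?_, ?_, rfl⟩)⟩
      · rw [hχneg]
        linarith
      · rw [hwa, hχneg, h]

theorem card_filter_div_eq_div_eq_one (hneg : quadraticChar F (-1) = -1) {u : F}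
    (hu : quadraticChar F (u + 1) = quadraticChar F (u - 1)) (hχ : quadraticChar F (u + 1) ≠ 0)
    {a : F} (ha : a ≠ 0) :
    #{x ∈ univ \ {0, -a} |
      (u * quadraticChar F (x + a) + 1) / (x + a) = (u * quadraticChar F x + 1) / x} = 1 := by
  have hu₁ : u + 1 ≠ 0 := fun h => hχ (by rw [h, quadraticChar_zero])
  have hu₂ : u - 1 ≠ 0 := fun h => hχ (by rw [hu, h, quadraticChar_zero])
  have hu₀ : u ≠ 0 := by
    rintro rfl
    rw [zero_add, zero_sub, map_one, hneg] at hu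
    exact absurd hu (by decide)
  have hmem (x : F) := div_eq_div_iff_of_quadraticChar (x := x) hneg hu hu₀ hu₁ hu₂ ha
  set v := a * (1 - u) / (2 * u)
  have hv : v ≠ 0 :=
    div_ne_zero (mul_ne_zero ha (sub_ne_zero.2 (sub_ne_zero.1 hu₂).symm))
      (mul_ne_zero (two_ne_zero_of_quadraticChar_neg_one hneg) hu₀)
  obtain ⟨y, hy⟩ : ∃ y, ∀ x, (x = v ∧ quadraticChar F v = -1 ∨
      x = -(a * (u + 1) / (2 * u)) ∧ quadraticChar F v = 1) ↔ x = y := by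
    rcases quadraticChar_dichotomy hv with h | h
    · exact ⟨-(a * (u + 1) / (2 * u)), fun x => by simp [h]⟩
    · exact ⟨v, fun x => by simp [h]⟩
  refine card_eq_one.2 ⟨y, ext fun x => ?_⟩
  rw [mem_singleton, ← hy, ← hmem]
  simp only [mem_filter, mem_sdiff, mem_univ, mem_insert, mem_singleton, not_or, true_and,
    eq_neg_iff_add_eq_zero, and_assoc, Ne]

theorem qchar_eq_quadraticChar (x : F) : qchar x = quadraticChar F x := by
  simp only [qchar, quadraticChar_apply, quadraticCharFun]
  split_ifs <;> rfl

theorem mul_pow_half_pred_add_pow_card_sub_two (hF : ringChar F ≠ 2) (u : F) {x : F}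
    (hx : x ≠ 0) :
    u * x ^ ((Fintype.card F - 1) / 2 - 1) + x ^ (Fintype.card F - 2) =
      (u * quadraticChar F x + 1) / x := by
  have hodd := FiniteField.odd_card_of_char_ne_two hF
  have htwo : 1 < Fintype.card F := Fintype.one_lt_card
  rw [eq_div_iff hx, add_mul, mul_assoc, ← pow_succ, ← pow_succ,
    show (Fintype.card F - 1) / 2 - 1 + 1 = Fintype.card F / 2 by omega,
    show Fintype.card F - 2 + 1 = Fintype.card F - 1 by omega,
    quadraticChar_eq_pow_of_char_ne_two' hF, FiniteField.pow_card_sub_one_eq_one x hx]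

end QuadraticChar

theorem stmt_12_general {F : Type*} [Field F] [Fintype F] (p n : ℕ)
    (hcard : Fintype.card F = p ^ n)
    (hq4 : p ^ n % 4 = 3) (u : F)
    (hu : qchar (u + 1) = qchar (u - 1)) (hu0 : qchar (u + 1) ≠ 0)
    (fu : F → F) (hfu : ∀ x, fu x = u * x ^ ((Fintype.card F - 1) / 2 - 1) + x ^ (Fintype.card F - 2))
    (a : F) (ha : a ≠ 0) :
    ((Finset.univ \ {0, -a} : Finset F).filter fun x => fu (x + a) - fu x = 0).card = 1 := by
  have hq3 : Fintype.card F % 4 = 3 := hcard ▸ hq4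
  have hneg : quadraticChar F (-1) = -1 := quadraticChar_neg_one_iff_not_isSquare.2
    (FiniteField.isSquare_neg_one_iff.not.2 (not_not.2 hq3))
  have hF : ringChar F ≠ 2 := by
    rw [Ne, FiniteField.even_card_iff_char_two]
    omega
  simp only [qchar_eq_quadraticChar] at hu hu0
  convert card_filter_div_eq_div_eq_one hneg hu hu0 ha using 2
  refine filter_congr fun x hx => ?_
  simp only [mem_sdiff, mem_univ, mem_insert, mem_singleton, not_or, true_and] at hx
  rw [sub_eq_zero, hfu, hfu, mul_pow_half_pred_add_pow_card_sub_two hF u hx.1,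
    mul_pow_half_pred_add_pow_card_sub_two hF u (eq_neg_iff_add_eq_zero.not.1 hx.2)]

theorem stmt_12 {F : Type*} [Field F] [Fintype F] (p n : ℕ)
    (hp : p.Prime) (hn : 0 < n) (hcard : Fintype.card F = p ^ n)
    (hq4 : p ^ n % 4 = 3) (hq7 : 7 ≤ p ^ n) (u : F)
    (hu : qchar (u + 1) = qchar (u - 1)) (hu0 : qchar (u + 1) ≠ 0)
    (fu : F → F) (hfu : ∀ x, fu x = u * x ^ ((Fintype.card F - 1) / 2 - 1) + x ^ (Fintype.card F - 2))
    (a : F) (ha : a ≠ 0) :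
    ((Finset.univ \ {0, -a} : Finset F).filter fun x => fu (x + a) - fu x = 0).card = 1 :=
  stmt_12_general p n hcard hq4 u hu hu0 fu hfu a ha
end

section
/- Let q = p^n ≡ 3 (mod 4), q ≥ 7, p > 3, and u = 4/5 ∈ F_q. Then there is no pair (a,b) ∈ F_q* × F_q with χ((9/5)ab) = -1, χ(a²b² - (36/5)ab) = 1, χ(a²b² - (4/5)ab) = 1, χ(a²b² - 4ab + 64/25) = 1, and χ((16/5)ab - 64/25) = 1. -/
/-! The product of the first and the last argument is `(12/5)² (a²b² - (4/5)ab)`, a square; dividing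
by the last argument, a nonzero square, would make the first argument a square as well. -/

open Finset
open scoped Classical

section

variable {F : Type*} [Field F] {x : F}

theorem qchar_eq_neg_one_iff : qchar x = -1 ↔ ¬IsSquare x := by
  by_cases hx : x = 0
  · simp [qchar, hx]
  · by_cases hs : IsSquare x <;> simp [qchar, hx, hs]

theorem qchar_eq_one_iff : qchar x = 1 ↔ x ≠ 0 ∧ IsSquare x := by
  by_cases hx : x = 0
  · simp [qchar, hx]
  · by_cases hs : IsSquare x <;> simp [qchar, hx, hs]

theorem isSquare_of_isSquare_mul {y : F} (hxy : IsSquare (x * y)) (hy : IsSquare y) (hy0 : y ≠ 0) :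
    IsSquare x := by
  simpa [hy0] using hxy.div hy

end

theorem stmt_14_general {F : Type*} [Field F] :
    ¬∃ a b : F, a ≠ 0 ∧
      qchar ((9 / 5 : F) * a * b) = -1 ∧
      qchar (a ^ 2 * b ^ 2 - (36 / 5 : F) * a * b) = 1 ∧
      qchar (a ^ 2 * b ^ 2 - (4 / 5 : F) * a * b) = 1 ∧
      qchar (a ^ 2 * b ^ 2 - 4 * a * b + (64 / 25 : F)) = 1 ∧
      qchar ((16 / 5 : F) * a * b - (64 / 25 : F)) = 1 := by
  rintro ⟨a, b, -, h1, -, h3, -, h5⟩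
  rw [qchar_eq_neg_one_iff] at h1
  rw [qchar_eq_one_iff] at h3 h5
  have key : ((9 / 5 : F) * a * b) * ((16 / 5 : F) * a * b - (64 / 25 : F))
      = (12 / 5 : F) ^ 2 * (a ^ 2 * b ^ 2 - (4 / 5 : F) * a * b) := by
    rw [show (64 / 25 : F) = 64 / 5 / 5 by rw [div_div]; norm_num]
    ring
  have hprod : IsSquare (((9 / 5 : F) * a * b) * ((16 / 5 : F) * a * b - (64 / 25 : F))) :=
    key ▸ (IsSquare.sq _).mul h3.2
  exact h1 (isSquare_of_isSquare_mul hprod h5.2 h5.1)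

theorem stmt_14 {F : Type*} [Field F] [Fintype F] (p n : ℕ)
    (hp : p.Prime) (hn : 0 < n) (hcard : Fintype.card F = p ^ n)
    (hq4 : p ^ n % 4 = 3) (hq7 : 7 ≤ p ^ n) (hp3 : 3 < p) (hp5 : p ≠ 5)
    (u : F) (hu : u = 4 / 5) :
    ¬∃ a b : F, a ≠ 0 ∧
      qchar ((9 / 5 : F) * a * b) = -1 ∧
      qchar (a ^ 2 * b ^ 2 - (36 / 5 : F) * a * b) = 1 ∧
      qchar (a ^ 2 * b ^ 2 - (4 / 5 : F) * a * b) = 1 ∧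
      qchar (a ^ 2 * b ^ 2 - 4 * a * b + (64 / 25 : F)) = 1 ∧
      qchar ((16 / 5 : F) * a * b - (64 / 25 : F)) = 1 :=
  stmt_14_general
end

section
/- Let q = p^n ≡ 3 (mod 4) with q > 19, and u ∈ F_q with χ(u+1) = χ(u-1) = χ(5u+3) = χ(5u-3) (all ±1). Then the generalized Ness–Helleseth function f_u(x) = u·x^{(q-1)/2-1} + x^{q-2} has differential uniformity 3: every derivative equation f_u(x+a) - f_u(x) = b (a ≠ 0) has at most 3 solutions, and some pair (a,b) achieves exactly 3 solutions. -/
open Finset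
open scoped Classical

/-!
Substituting `x = a * y` turns `f_u (x + a) - f_u x = b` into `f_v (y + 1) - f_v y = a * b`
with `v = χ(a) u = ±u`, and the hypothesis `χ(v + 1) = χ(v - 1) ≠ 0` is invariant under
`v ↦ -v`. Since `y f_v(y) = v χ(y) + 1` for `y ≠ 0`, a solution `y ∉ {0, -1}` of
`f_v (y + 1) - f_v y = c` whose type is `(s, t) = (χ y, χ (y + 1))` is a root of
`c y (y + 1) = (v t + 1) y - (v s + 1) (y + 1)`.
If two distinct solutions have the same type, Vieta gives `c y y' = v s + 1` and
`c (y + 1) (y' + 1) = v t + 1`; as `χ(v s + 1) = s χ(v + 1)`, this forces `s = t`, and then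
`y' = -(y + 1)` has the wrong character. Solutions of types `(1, 1)` and `(-1, -1)` cannot coexist
since each determines `χ c`, and type `(1, -1)` is impossible when `0` or `-1` is a solution,
i.e. when `c = v + 1` or `c = 1 - v`. So there are at most three solutions.
For `c = v + 1` the solutions are `0` and one root each of the quadratics for the types
`(-1, -1)` and `(-1, 1)`: their discriminants `(v + 1)(5v - 3)` and `(v - 1)(5v + 3)` are squares
by the hypothesis on `u`, and the product of their roots has character `-1`.
-/

namespace NessHelleseth

variable {F : Type*} [Field F] [Fintype F]

local notation "χ" => quadraticChar F

lemma qchar_eq_quadraticChar (x : F) : qchar x = χ x := by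
  rw [qchar, quadraticChar_apply, quadraticCharFun]
  split_ifs <;> simp_all

lemma ringChar_ne_two_of_card_mod_four (hF : Fintype.card F % 4 = 3) : ringChar F ≠ 2 :=
  fun h => by have := FiniteField.even_card_of_char_two h; omega

lemma quadraticChar_neg (hF : Fintype.card F % 4 = 3) (x : F) : χ (-x) = -χ x := by
  rw [neg_eq_neg_one_mul, map_mul, quadraticChar_neg_one (ringChar_ne_two_of_card_mod_four hF),
    ZMod.χ₄_nat_three_mod_four hF, neg_one_mul]

lemma ne_zero_of_quadraticChar_eq {x y : F} (hx : x ≠ 0) (h : χ y = χ x) : y ≠ 0 :=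
  fun hy => hx (quadraticChar_eq_zero_iff.mp (by rw [← h, hy, quadraticChar_zero]))

lemma quadraticChar_mul_mul_of_eq {y y' : F} (hy : y ≠ 0) (h : χ y' = χ y) (c : F) :
    χ (c * (y * y')) = χ c := by
  rw [map_mul, map_mul, h, ← sq, quadraticChar_sq_one hy, mul_one]

lemma isSquare_mul_of_quadraticChar_eq {x y : F} (hx : x ≠ 0) (h : χ y = χ x) :
    IsSquare (x * y) := by
  have hy := ne_zero_of_quadraticChar_eq hx h
  rw [← quadraticChar_one_iff_isSquare (mul_ne_zero hx hy), map_mul, h, ← sq,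
    quadraticChar_sq_one hx]

lemma exists_root_quadraticChar_eq_neg_one (hF : ringChar F ≠ 2) {A B C : F} (hA : A ≠ 0)
    (hd : IsSquare (discrim A B C)) (hAC : χ (A * C) = -1) :
    ∃ x, A * (x * x) + B * x + C = 0 ∧ χ x = -1 := by
  have : NeZero (2 : F) := ⟨Ring.two_ne_zero hF⟩
  obtain ⟨s, hs⟩ := hd
  obtain ⟨x, hx⟩ := exists_quadratic_eq_zero hA ⟨s, hs⟩
  obtain ⟨x', hsum⟩ : ∃ x', A * x' + B = -(A * x) := ⟨-B / A - x, by field_simp; ring⟩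
  have hprod : A * (x * x') = C := by linear_combination x * hsum - hx
  have hroot' : A * (x' * x') + B * x' + C = 0 := by linear_combination x' * hsum - hprod
  have hchar : χ x * χ x' = -1 := by
    have := congrArg χ (congrArg (A * ·) hprod)
    simp only [map_mul] at this hAC
    rw [← hAC, ← this]
    linear_combination (-(χ x * χ x')) * quadraticChar_sq_one hA
  rcases quadraticChar_isQuadratic F x with h | h | h
  · simp [h] at hchar
  · exact ⟨x', hroot', by simpa [h] using hchar⟩
  · exact ⟨x, hx, h⟩

lemma mul_pow_half_sub_one (hF : Fintype.card F % 4 = 3) (x : F) :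
    x * x ^ ((Fintype.card F - 1) / 2 - 1) = χ x := by
  rw [quadraticChar_eq_pow_of_char_ne_two' (ringChar_ne_two_of_card_mod_four hF), ← pow_succ']
  congr 1
  omega

lemma mul_pow_card_sub_two (hF : Fintype.card F % 4 = 3) {x : F} (hx : x ≠ 0) :
    x * x ^ (Fintype.card F - 2) = 1 := by
  rw [← pow_succ', show Fintype.card F - 2 + 1 = Fintype.card F - 1 by omega]
  exact FiniteField.pow_card_sub_one_eq_one x hx

def nessHelleseth (u x : F) : F :=
  u * x ^ ((Fintype.card F - 1) / 2 - 1) + x ^ (Fintype.card F - 2)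

noncomputable def derivSol (f : F → F) (a b : F) : Finset F :=
  univ.filter fun x => f (x + a) - f x = b

section

variable {u : F}

lemma mul_nessHelleseth (hF : Fintype.card F % 4 = 3) {x : F} (hx : x ≠ 0) :
    x * nessHelleseth u x = u * χ x + 1 := by
  rw [nessHelleseth]
  linear_combination u * mul_pow_half_sub_one hF x + mul_pow_card_sub_two hF hx

lemma nessHelleseth_zero (h4 : 4 < Fintype.card F) : nessHelleseth u 0 = 0 := by
  rw [nessHelleseth, zero_pow (by omega : (Fintype.card F - 1) / 2 - 1 ≠ 0),
    zero_pow (by omega : Fintype.card F - 2 ≠ 0), mul_zero, add_zero]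

lemma nessHelleseth_quadraticChar_mul (hF : Fintype.card F % 4 = 3) {a : F} (ha : a ≠ 0)
    (y : F) : nessHelleseth (χ a * u) y = a * nessHelleseth u (a * y) := by
  rw [nessHelleseth, nessHelleseth, mul_pow, mul_pow]
  linear_combination -u * y ^ ((Fintype.card F - 1) / 2 - 1) * mul_pow_half_sub_one hF a
    - y ^ (Fintype.card F - 2) * mul_pow_card_sub_two hF ha

lemma card_derivSol_nessHelleseth (hF : Fintype.card F % 4 = 3) {a : F} (ha : a ≠ 0) (b : F) :
    #(derivSol (nessHelleseth u) a b) = #(derivSol (nessHelleseth (χ a * u)) 1 (a * b)) := by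
  refine (card_equiv (Equiv.mulLeft₀ a ha) fun y => ?_).symm
  simp only [derivSol, mem_filter, mem_univ, true_and, Equiv.mulLeft₀_apply,
    nessHelleseth_quadraticChar_mul hF ha, ← mul_sub, mul_add, mul_one, mul_right_inj' ha]

end

section

variable {v c : F}

lemma quadraticChar_one_sub (hF : Fintype.card F % 4 = 3) (hv : χ (v + 1) = χ (v - 1)) :
    χ (1 - v) = -χ (v + 1) := by
  rw [show 1 - v = -(v - 1) by ring, quadraticChar_neg hF, hv]

lemma quadraticChar_mul_sign_add_one (hF : Fintype.card F % 4 = 3)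
    (hv : χ (v + 1) = χ (v - 1)) {s : ℤ} (hs : s = 1 ∨ s = -1) :
    χ (v * s + 1) = s * χ (v + 1) := by
  rcases hs with rfl | rfl
  · simp
  · rw [show v * ((-1 : ℤ) : F) + 1 = 1 - v by push_cast; ring, quadraticChar_one_sub hF hv]
    ring

lemma add_one_ne_one_sub (hF : Fintype.card F % 4 = 3) (hv : χ (v + 1) = χ (v - 1))
    (hσ : χ (v + 1) ≠ 0) : v + 1 ≠ 1 - v := by
  intro h
  have := congrArg χ h
  rw [quadraticChar_one_sub hF hv] at this
  omega

lemma mem_derivSol_one_iff (hF : Fintype.card F % 4 = 3) {y : F} (hy : y ≠ 0)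
    (hy1 : y + 1 ≠ 0) :
    y ∈ derivSol (nessHelleseth v) 1 c ↔
      c * (y * (y + 1)) = (v * χ (y + 1) + 1) * y - (v * χ y + 1) * (y + 1) := by
  have e := mul_nessHelleseth (u := v) hF hy
  have e1 := mul_nessHelleseth (u := v) hF hy1
  simp only [derivSol, mem_filter, mem_univ, true_and]
  constructor
  · intro h
    linear_combination -(y * (y + 1)) * h + y * e1 - (y + 1) * e
  · intro h
    refine mul_left_cancel₀ (mul_ne_zero hy hy1) ?_
    linear_combination y * e1 - (y + 1) * e - h

lemma zero_mem_derivSol_one_iff (h4 : 4 < Fintype.card F) :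
    0 ∈ derivSol (nessHelleseth v) 1 c ↔ c = v + 1 := by
  rw [derivSol, mem_filter, zero_add, nessHelleseth_zero h4, sub_zero, nessHelleseth, one_pow,
    one_pow, mul_one, eq_comm]
  simp

lemma neg_one_mem_derivSol_one_iff (hF : Fintype.card F % 4 = 3) (h4 : 4 < Fintype.card F) :
    -1 ∈ derivSol (nessHelleseth v) 1 c ↔ c = 1 - v := by
  have e := mul_nessHelleseth (u := v) hF (neg_ne_zero.mpr one_ne_zero)
  rw [quadraticChar_neg hF, map_one] at e
  simp only [derivSol, mem_filter, mem_univ, true_and, neg_add_cancel, nessHelleseth_zero h4]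
  push_cast at e
  constructor <;> intro h <;> linear_combination e - h

lemma ne_zero_of_quadraticChar_add_one_eq {y : F} (hpure : χ (y + 1) = χ y) :
    y ≠ 0 ∧ y + 1 ≠ 0 := by
  have h0 : y ≠ 0 := by rintro rfl; simp at hpure
  exact ⟨h0, ne_zero_of_quadraticChar_eq h0 hpure⟩

lemma eq_of_quadraticChar_eq (hF : Fintype.card F % 4 = 3) (hv : χ (v + 1) = χ (v - 1))
    (hσ : χ (v + 1) ≠ 0) {y y' : F} (hy : y ∈ derivSol (nessHelleseth v) 1 c)
    (hy' : y' ∈ derivSol (nessHelleseth v) 1 c) (h0 : y ≠ 0) (h1 : y + 1 ≠ 0)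
    (hs : χ y' = χ y) (ht : χ (y' + 1) = χ (y + 1)) : y' = y := by
  by_contra hne
  have E := (mem_derivSol_one_iff hF h0 h1).mp hy
  have E' := (mem_derivSol_one_iff hF (ne_zero_of_quadraticChar_eq h0 hs)
    (ne_zero_of_quadraticChar_eq h1 ht)).mp hy'
  rw [hs, ht] at E'
  have hsum : c * (y + y' + 1) = v * (χ (y + 1) - χ y) :=
    mul_left_cancel₀ (sub_ne_zero.mpr hne) (by linear_combination E' - E)
  have hprod : c * (y * y') = v * χ y + 1 := by linear_combination y * hsum - E
  have hprod1 : c * ((y + 1) * (y' + 1)) = v * χ (y + 1) + 1 := by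
    linear_combination hprod + hsum
  have hSs := quadraticChar_dichotomy h0
  have hSt := quadraticChar_dichotomy h1
  have hcs := congrArg χ hprod
  have hct := congrArg χ hprod1
  rw [quadraticChar_mul_mul_of_eq h0 hs, quadraticChar_mul_sign_add_one hF hv hSs] at hcs
  rw [quadraticChar_mul_mul_of_eq h1 ht, quadraticChar_mul_sign_add_one hF hv hSt] at hct
  have hst : χ (y + 1) = χ y := mul_right_cancel₀ hσ (hct.symm.trans hcs)
  have hc : c ≠ 0 := by
    rintro rfl
    rw [quadraticChar_zero] at hcs
    rcases hSs with h | h <;> rw [h] at hcs <;> omega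
  have hy'eq : y' = -(y + 1) := by
    have h2 : c * (y + y' + 1) = 0 := by rw [hsum, hst]; simp
    linear_combination (mul_eq_zero.mp h2).resolve_left hc
  rw [hy'eq, quadraticChar_neg hF, hst] at hs
  exact quadraticChar_eq_zero_iff.not.mpr h0 (by omega)

lemma quadraticChar_eq_of_quadraticChar_add_one_eq (hF : Fintype.card F % 4 = 3)
    (hv : χ (v + 1) = χ (v - 1)) {y : F} (hy : y ∈ derivSol (nessHelleseth v) 1 c)
    (hpure : χ (y + 1) = χ y) : χ c = -(χ y * χ (v + 1)) := by
  obtain ⟨h0, h1⟩ := ne_zero_of_quadraticChar_add_one_eq hpure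
  have E := (mem_derivSol_one_iff hF h0 h1).mp hy
  rw [hpure] at E
  have := congrArg χ (show c * (y * (y + 1)) = -(v * χ y + 1) by linear_combination E)
  rwa [quadraticChar_mul_mul_of_eq h0 hpure, quadraticChar_neg hF,
    quadraticChar_mul_sign_add_one hF hv (quadraticChar_dichotomy h0)] at this

lemma eq_of_quadraticChar_add_one_eq (hF : Fintype.card F % 4 = 3)
    (hv : χ (v + 1) = χ (v - 1)) (hσ : χ (v + 1) ≠ 0) {y y' : F}
    (hy : y ∈ derivSol (nessHelleseth v) 1 c) (hy' : y' ∈ derivSol (nessHelleseth v) 1 c)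
    (hpure : χ (y + 1) = χ y) (hpure' : χ (y' + 1) = χ y') : y' = y := by
  obtain ⟨h0, h1⟩ := ne_zero_of_quadraticChar_add_one_eq hpure
  have hs : χ y' = χ y := by
    have := (quadraticChar_eq_of_quadraticChar_add_one_eq hF hv hy' hpure').symm.trans
      (quadraticChar_eq_of_quadraticChar_add_one_eq hF hv hy hpure)
    exact mul_right_cancel₀ hσ (neg_inj.mp this)
  exact eq_of_quadraticChar_eq hF hv hσ hy hy' h0 h1 hs (by rw [hpure, hpure', hs])

lemma ne_add_one_and_ne_one_sub (hF : Fintype.card F % 4 = 3) (hv : χ (v + 1) = χ (v - 1))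
    (hσ : χ (v + 1) ≠ 0) {y : F} (hy : y ∈ derivSol (nessHelleseth v) 1 c)
    (hs : χ y = 1) (ht : χ (y + 1) = -1) : c ≠ v + 1 ∧ c ≠ 1 - v := by
  have h0 : y ≠ 0 := by rintro rfl; simp at hs
  have h1 : y + 1 ≠ 0 := by intro h; rw [h] at ht; simp at ht
  have E := (mem_derivSol_one_iff hF h0 h1).mp hy
  rw [hs, ht] at E
  push_cast at E
  constructor
  · rintro rfl
    have := congrArg χ
      (show (v + 1) * ((y + 1) * (y + 1)) = (1 - v) * y by linear_combination E)
    rw [quadraticChar_mul_mul_of_eq h1 rfl, map_mul, quadraticChar_one_sub hF hv, hs] at this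
    omega
  · rintro rfl
    have := congrArg χ (show (1 - v) * (y * y) = -(v + 1) * (y + 1) by linear_combination E)
    rw [quadraticChar_mul_mul_of_eq h0 rfl, map_mul, quadraticChar_neg hF,
      quadraticChar_one_sub hF hv, ht] at this
    omega

lemma eq_zero_or_eq_neg_one_or_quadraticChar_eq_one_neg_one {y : F} (hpure : χ (y + 1) ≠ χ y)
    (hmix : ¬(χ y = -1 ∧ χ (y + 1) = 1)) :
    y = 0 ∨ y = -1 ∨ (χ y = 1 ∧ χ (y + 1) = -1) := by
  by_cases h0 : y = 0
  · exact .inl h0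
  by_cases h1 : y + 1 = 0
  · exact .inr (.inl (eq_neg_of_add_eq_zero_left h1))
  rcases quadraticChar_dichotomy h0 with hs | hs <;>
    rcases quadraticChar_dichotomy h1 with ht | ht <;> simp_all

lemma eq_of_quadraticChar_add_one_ne (hF : Fintype.card F % 4 = 3) (h4 : 4 < Fintype.card F)
    (hv : χ (v + 1) = χ (v - 1)) (hσ : χ (v + 1) ≠ 0) {y y' : F}
    (hy : y ∈ derivSol (nessHelleseth v) 1 c) (hy' : y' ∈ derivSol (nessHelleseth v) 1 c)
    (hpure : χ (y + 1) ≠ χ y) (hmix : ¬(χ y = -1 ∧ χ (y + 1) = 1))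
    (hpure' : χ (y' + 1) ≠ χ y') (hmix' : ¬(χ y' = -1 ∧ χ (y' + 1) = 1)) : y' = y := by
  have key {z : F} (hz : z ∈ derivSol (nessHelleseth v) 1 c) (hpure : χ (z + 1) ≠ χ z)
      (hmix : ¬(χ z = -1 ∧ χ (z + 1) = 1)) :
      (z = 0 ∧ c = v + 1) ∨ (z = -1 ∧ c = 1 - v) ∨
        (χ z = 1 ∧ χ (z + 1) = -1 ∧ c ≠ v + 1 ∧ c ≠ 1 - v) := by
    rcases eq_zero_or_eq_neg_one_or_quadraticChar_eq_one_neg_one hpure hmix with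
      rfl | rfl | ⟨hs, ht⟩
    · exact .inl ⟨rfl, (zero_mem_derivSol_one_iff h4).mp hz⟩
    · exact .inr (.inl ⟨rfl, (neg_one_mem_derivSol_one_iff hF h4).mp hz⟩)
    · exact .inr (.inr ⟨hs, ht, ne_add_one_and_ne_one_sub hF hv hσ hz hs ht⟩)
  have hne := add_one_ne_one_sub hF hv hσ
  rcases key hy hpure hmix with ⟨rfl, rfl⟩ | ⟨rfl, rfl⟩ | ⟨hs, ht, hc⟩ <;>
    rcases key hy' hpure' hmix' with ⟨rfl, hc'⟩ | ⟨rfl, hc'⟩ | ⟨hs', ht', hc'⟩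
  all_goals first
    | rfl
    | exact eq_of_quadraticChar_eq hF hv hσ hy hy' (by rintro rfl; simp at hs)
        (by intro h; rw [h] at ht; simp at ht) (hs'.trans hs.symm) (ht'.trans ht.symm)
    | simp_all

theorem card_derivSol_one_le_three (hF : Fintype.card F % 4 = 3) (h4 : 4 < Fintype.card F)
    (hv : χ (v + 1) = χ (v - 1)) (hσ : χ (v + 1) ≠ 0) (c : F) :
    #(derivSol (nessHelleseth v) 1 c) ≤ 3 := by
  set S := derivSol (nessHelleseth v) 1 c
  have hcover : S ⊆ S.filter (fun y => χ (y + 1) = χ y) ∪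
      S.filter (fun y => χ y = -1 ∧ χ (y + 1) = 1) ∪
      S.filter (fun y => χ (y + 1) ≠ χ y ∧ ¬(χ y = -1 ∧ χ (y + 1) = 1)) := by
    intro y hy
    simp only [mem_union, mem_filter]
    tauto
  have hpure : #(S.filter fun y => χ (y + 1) = χ y) ≤ 1 := by
    refine card_le_one.mpr fun y hy y' hy' => ?_
    rw [mem_filter] at hy hy'
    exact (eq_of_quadraticChar_add_one_eq hF hv hσ hy.1 hy'.1 hy.2 hy'.2).symm
  have hmix : #(S.filter fun y => χ y = -1 ∧ χ (y + 1) = 1) ≤ 1 := by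
    refine card_le_one.mpr fun y hy y' hy' => ?_
    rw [mem_filter] at hy hy'
    refine (eq_of_quadraticChar_eq hF hv hσ hy.1 hy'.1 ?_ ?_ ?_ ?_).symm
    · rintro rfl; simp at hy
    · intro h; simp [h] at hy
    · rw [hy.2.1, hy'.2.1]
    · rw [hy.2.2, hy'.2.2]
  have hrest :
      #(S.filter fun y => χ (y + 1) ≠ χ y ∧ ¬(χ y = -1 ∧ χ (y + 1) = 1)) ≤ 1 := by
    refine card_le_one.mpr fun y hy y' hy' => ?_
    rw [mem_filter] at hy hy'
    exact (eq_of_quadraticChar_add_one_ne hF h4 hv hσ hy.1 hy'.1 hy.2.1 hy.2.2 hy'.2.1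
      hy'.2.2).symm
  calc #S ≤ _ := card_le_card hcover
    _ ≤ 1 + 1 + 1 :=
      (card_union_le _ _).trans
        (add_le_add ((card_union_le _ _).trans (add_le_add hpure hmix)) hrest)

lemma quadraticChar_mul_one_sub (hF : Fintype.card F % 4 = 3) (hv : χ (v + 1) = χ (v - 1))
    (hσ : χ (v + 1) ≠ 0) : χ ((v + 1) * (1 - v)) = -1 := by
  have hv1 : v + 1 ≠ 0 := fun h => hσ (quadraticChar_eq_zero_iff.mpr h)
  rw [map_mul, quadraticChar_one_sub hF hv]
  linear_combination -quadraticChar_sq_one hv1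

lemma exists_mem_derivSol_one_quadraticChar_neg_one_neg_one (hF : Fintype.card F % 4 = 3)
    (hv : χ (v + 1) = χ (v - 1)) (hσ : χ (v + 1) ≠ 0) (h5 : χ (5 * v - 3) = χ (v + 1)) :
    ∃ y ∈ derivSol (nessHelleseth v) 1 (v + 1), χ y = -1 ∧ χ (y + 1) = -1 := by
  have hv1 : v + 1 ≠ 0 := fun h => hσ (quadraticChar_eq_zero_iff.mpr h)
  have hdisc : discrim (v + 1) (v + 1) (1 - v) = (v + 1) * (5 * v - 3) := by
    rw [discrim]; ring
  obtain ⟨a, ha, hs⟩ :=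
    exists_root_quadraticChar_eq_neg_one (ringChar_ne_two_of_card_mod_four hF) hv1
      (hdisc ▸ isSquare_mul_of_quadraticChar_eq hv1 h5) (quadraticChar_mul_one_sub hF hv hσ)
  have ht : χ (a + 1) = -1 := by
    have := congrArg χ (show (v + 1) * (a * (a + 1)) = v - 1 by linear_combination ha)
    rw [map_mul, map_mul, hs, ← hv] at this
    have := mul_left_cancel₀ hσ (this.trans (mul_one _).symm)
    omega
  have h0 : a ≠ 0 := by rintro rfl; simp at hs
  have h1 : a + 1 ≠ 0 := by intro h; rw [h] at ht; simp at ht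
  refine ⟨a, (mem_derivSol_one_iff hF h0 h1).mpr ?_, hs, ht⟩
  rw [hs, ht]
  push_cast
  linear_combination ha

lemma exists_mem_derivSol_one_quadraticChar_neg_one_one (hF : Fintype.card F % 4 = 3)
    (hv : χ (v + 1) = χ (v - 1)) (hσ : χ (v + 1) ≠ 0) (h5 : χ (5 * v + 3) = χ (v - 1)) :
    ∃ y ∈ derivSol (nessHelleseth v) 1 (v + 1), χ y = -1 ∧ χ (y + 1) = 1 := by
  have hv1 : v + 1 ≠ 0 := fun h => hσ (quadraticChar_eq_zero_iff.mpr h)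
  have hv1' : v - 1 ≠ 0 := fun h => hσ (by rw [hv, h, quadraticChar_zero])
  have h53 : 5 * v + 3 ≠ 0 := fun h => hσ (by rw [hv, ← h5, h, quadraticChar_zero])
  have hdisc : discrim (v + 1) (1 - v) (1 - v) = (v - 1) * (5 * v + 3) := by
    rw [discrim]; ring
  obtain ⟨a, ha, hs⟩ :=
    exists_root_quadraticChar_eq_neg_one (ringChar_ne_two_of_card_mod_four hF) hv1
      (hdisc ▸ isSquare_mul_of_quadraticChar_eq hv1' h5) (quadraticChar_mul_one_sub hF hv hσ)
  have h2 : a + 2 ≠ 0 := by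
    intro h
    obtain rfl : a = -2 := by linear_combination h
    exact h53 (by linear_combination ha)
  have ht : χ (a + 1) = 1 := by
    have := congrArg χ
      (show (v + 1) * ((a + 2) * (a + 2)) = (5 * v + 3) * (a + 1) by linear_combination ha)
    rw [quadraticChar_mul_mul_of_eq h2 rfl, map_mul, h5, ← hv] at this
    exact (mul_left_cancel₀ hσ ((mul_one _).trans this)).symm
  have h0 : a ≠ 0 := by rintro rfl; simp at hs
  have h1 : a + 1 ≠ 0 := by intro h; rw [h] at ht; simp at ht
  refine ⟨a, (mem_derivSol_one_iff hF h0 h1).mpr ?_, hs, ht⟩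
  rw [hs, ht]
  push_cast
  linear_combination ha

theorem card_derivSol_one_eq_three (hF : Fintype.card F % 4 = 3) (h4 : 4 < Fintype.card F)
    (hv : χ (v + 1) = χ (v - 1)) (hσ : χ (v + 1) ≠ 0) (h5 : χ (5 * v - 3) = χ (v + 1))
    (h5' : χ (5 * v + 3) = χ (v - 1)) :
    #(derivSol (nessHelleseth v) 1 (v + 1)) = 3 := by
  obtain ⟨y, hy, hs, ht⟩ := exists_mem_derivSol_one_quadraticChar_neg_one_neg_one hF hv hσ h5
  obtain ⟨y', hy', hs', ht'⟩ := exists_mem_derivSol_one_quadraticChar_neg_one_one hF hv hσ h5'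
  have hsub : {0, y, y'} ⊆ derivSol (nessHelleseth v) 1 (v + 1) := by
    simp only [insert_subset_iff, singleton_subset_iff, zero_mem_derivSol_one_iff h4, hy, hy',
      and_self]
  have hcard : #{0, y, y'} = 3 := by
    refine card_eq_three.mpr ⟨0, y, y', ?_, ?_, ?_, rfl⟩
    · rintro rfl; simp at hs
    · rintro rfl; simp at hs'
    · rintro rfl; rw [ht] at ht'; simp at ht'
  exact le_antisymm (card_derivSol_one_le_three hF h4 hv hσ _) (hcard ▸ card_le_card hsub)

end

theorem card_derivSol_nessHelleseth_le_three (hF : Fintype.card F % 4 = 3)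
    (h4 : 4 < Fintype.card F) {u : F} (hu : χ (u + 1) = χ (u - 1)) (hσ : χ (u + 1) ≠ 0)
    {a : F} (ha : a ≠ 0) (b : F) : #(derivSol (nessHelleseth u) a b) ≤ 3 := by
  rw [card_derivSol_nessHelleseth hF ha]
  rcases quadraticChar_dichotomy ha with h | h <;> rw [h]
  · simpa using card_derivSol_one_le_three hF h4 hu hσ (a * b)
  · have hneg : χ (-u + 1) = χ (-u - 1) := by
      rw [show -u + 1 = -(u - 1) by ring, show -u - 1 = -(u + 1) by ring, quadraticChar_neg hF,
        quadraticChar_neg hF, hu]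
    have hσ' : χ (-u + 1) ≠ 0 := by
      rw [hneg, show -u - 1 = -(u + 1) by ring, quadraticChar_neg hF]
      omega
    simpa using card_derivSol_one_le_three hF h4 hneg hσ' (a * b)

end NessHelleseth

theorem stmt_19_general {F : Type*} [Field F] [Fintype F] (p n : ℕ)
    (hcard : Fintype.card F = p ^ n)
    (hq4 : p ^ n % 4 = 3) (hq : 19 < p ^ n) (u : F)
    (hu : qchar (u + 1) = qchar (u - 1) ∧ qchar (u - 1) = qchar (5 * u + 3) ∧
          qchar (5 * u + 3) = qchar (5 * u - 3) ∧ qchar (u + 1) ≠ 0)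
    (fu : F → F) (hfu : ∀ x, fu x = u * x ^ ((Fintype.card F - 1) / 2 - 1) + x ^ (Fintype.card F - 2)) :
    (∀ a b : F, a ≠ 0 →
      (Finset.univ.filter fun x : F => fu (x + a) - fu x = b).card ≤ 3) ∧
    (∃ a b : F, a ≠ 0 ∧
      (Finset.univ.filter fun x : F => fu (x + a) - fu x = b).card = 3) := by
  have hF : Fintype.card F % 4 = 3 := hcard ▸ hq4
  have h4 : 4 < Fintype.card F := by omega
  simp only [NessHelleseth.qchar_eq_quadraticChar] at hu
  obtain ⟨h1, h2, h3, hσ⟩ := hu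
  obtain rfl : fu = NessHelleseth.nessHelleseth u := funext hfu
  exact ⟨fun a b ha => NessHelleseth.card_derivSol_nessHelleseth_le_three hF h4 h1 hσ ha b,
    1, u + 1, one_ne_zero,
    NessHelleseth.card_derivSol_one_eq_three hF h4 h1 hσ (h1.trans (h2.trans h3)).symm h2.symm⟩

theorem stmt_19 {F : Type*} [Field F] [Fintype F] (p n : ℕ)
    (hp : p.Prime) (hodd : p ≠ 2) (hn : 0 < n) (hcard : Fintype.card F = p ^ n)
    (hq4 : p ^ n % 4 = 3) (hq : 19 < p ^ n) (u : F)
    (hu : qchar (u + 1) = qchar (u - 1) ∧ qchar (u - 1) = qchar (5 * u + 3) ∧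
          qchar (5 * u + 3) = qchar (5 * u - 3) ∧ qchar (u + 1) ≠ 0)
    (fu : F → F) (hfu : ∀ x, fu x = u * x ^ ((Fintype.card F - 1) / 2 - 1) + x ^ (Fintype.card F - 2)) :
    (∀ a b : F, a ≠ 0 →
      (Finset.univ.filter fun x : F => fu (x + a) - fu x = b).card ≤ 3) ∧
    (∃ a b : F, a ≠ 0 ∧
      (Finset.univ.filter fun x : F => fu (x + a) - fu x = b).card = 3) :=
  stmt_19_general p n hcard hq4 hq u hu fu hfu
end
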